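/- arXiv:2307.01880 — 8 statements merged into one kernel-verified Lean document; each statement's English description precedes it below -/
import Mathlib

section
/- Let G be a locally compact, second countable, Hausdorff topological group and let Λ ⊆ G be a closed subset with finite local complexity. Then there exists an open neighborhood U of the identity e such that P ∩ U = {e} for every P ∈ Ω₀(Λ). -/
open Set Filter Topology Pointwise

/-- The space `𝒞(G)` of closed subsets of a topological space `G`. -/
structure CFClosed (G : Type*) [TopologicalSpace G] where
  carrier : Set G
  isClosed' : IsClosed carrier

namespace CFClosed

variable {G : Type*} [TopologicalSpace G]

instance : SetLike (CFClosed G) G where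
  coe := CFClosed.carrier
  coe_injective := fun P Q h => by cases P; cases Q; congr

/-- The Chabauty–Fell topology on `𝒞(G)`, generated by the subbasis consisting of
`O_K = {C | C ∩ K = ∅}` for `K` compact and `O_U = {C | C ∩ U ≠ ∅}` for `U` open. -/
instance chabautyFell : TopologicalSpace (CFClosed G) :=
  TopologicalSpace.generateFrom
    ({s | ∃ K : Set G, IsCompact K ∧ s = {C : CFClosed G | (C : Set G) ∩ K = ∅}} ∪
     {s | ∃ U : Set G, IsOpen U ∧ s = {C : CFClosed G | ((C : Set G) ∩ U).Nonempty}})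

end CFClosed
section Hulls

variable {G : Type*} [TopologicalSpace G] [Group G]

/-- The hull `Ω(Λ)` of a closed subset `Λ ⊆ G`: the closure in the Chabauty–Fell topology
of the set of left translates of `Λ`. -/
def hull (Λ : CFClosed G) : Set (CFClosed G) :=
  closure {P : CFClosed G | ∃ g : G, (P : Set G) = g • (Λ : Set G)}

/-- The discrete hull `Ω₀(Λ)`: elements of the hull containing the identity. -/
def discreteHull (Λ : CFClosed G) : Set (CFClosed G) :=
  {P ∈ hull Λ | (1 : G) ∈ P}

/-- Finite local complexity: for every compact `K ⊆ G` there is a finite collection `𝓕` of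
finite subsets of `G` such that every `P ∈ Ω₀(Λ)` satisfies `K ∩ P = h • F` for some
`h ∈ G`, `F ∈ 𝓕`. -/
def FLC (Λ : CFClosed G) : Prop :=
  ∀ K : Set G, IsCompact K → ∃ 𝓕 : Set (Set G), 𝓕.Finite ∧ (∀ F ∈ 𝓕, F.Finite) ∧
    ∀ P ∈ discreteHull Λ, ∃ h : G, ∃ F ∈ 𝓕, K ∩ (P : Set G) = h • F

end Hulls

/-!
If every `K ∩ P` with `1 ∈ P` is a translate `h • F` of one of finitely many finite sets, then
`h = f⁻¹` for some `f ∈ F`, so `K ∩ P ⊆ F⁻¹ * F`. Hence all these `K ∩ P` lie in one finite set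
`D`, and removing the closed set `D \ {1}` from the interior of `K` leaves a neighbourhood of `1`
meeting every `P` only in `1`.
-/

theorem mem_inv_mul_of_mem_smul_of_one_mem_smul {G : Type*} [Group G] {h x : G} {F : Set G}
    (hx : x ∈ h • F) (h1 : (1 : G) ∈ h • F) : x ∈ F⁻¹ * F := by
  obtain ⟨f₁, hf₁, rfl⟩ := hx
  obtain ⟨f₂, hf₂, hhf₂⟩ := h1
  obtain rfl : h = f₂⁻¹ := eq_inv_of_mul_eq_one_left hhf₂
  exact mul_mem_mul (inv_mem_inv.mpr hf₂) hf₁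

theorem exists_isOpen_inter_eq_singleton_one_of_inter_eq_smul {G ι : Type*} [Group G]
    [TopologicalSpace G] [T1Space G] {P : ι → Set G} {K : Set G} {𝓕 : Set (Set G)}
    (hK : K ∈ 𝓝 1) (h𝓕 : 𝓕.Finite) (hF : ∀ F ∈ 𝓕, F.Finite) (hP : ∀ i, (1 : G) ∈ P i)
    (hKP : ∀ i, ∃ h : G, ∃ F ∈ 𝓕, K ∩ P i = h • F) :
    ∃ U : Set G, IsOpen U ∧ (1 : G) ∈ U ∧ ∀ i, P i ∩ U = {1} := by
  set D := ⋃ F ∈ 𝓕, F⁻¹ * F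
  have hD : D.Finite := h𝓕.biUnion fun F hF𝓕 => (hF F hF𝓕).inv.mul (hF F hF𝓕)
  have hKPD : ∀ i, K ∩ P i ⊆ D := fun i x hx => by
    obtain ⟨h, F, hF𝓕, hKF⟩ := hKP i
    have h1 : (1 : G) ∈ h • F := hKF ▸ ⟨mem_of_mem_nhds hK, hP i⟩
    exact mem_biUnion hF𝓕 (mem_inv_mul_of_mem_smul_of_one_mem_smul (hKF ▸ hx) h1)
  have h1K : (1 : G) ∈ interior K := mem_interior_iff_mem_nhds.mpr hK
  have h1D : (1 : G) ∉ D \ {1} := fun h => h.2 rfl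
  refine ⟨interior K \ (D \ {1}), isOpen_interior.sdiff hD.sdiff.isClosed, ⟨h1K, h1D⟩,
    fun i => eq_singleton_iff_unique_mem.mpr ⟨⟨hP i, h1K, h1D⟩, ?_⟩⟩
  rintro x ⟨hxP, hxK, hxD⟩
  by_contra hx1
  exact hxD ⟨hKPD i ⟨interior_subset hxK, hxP⟩, hx1⟩

theorem FLC_implies_uniformly_discrete_general (G : Type*) [TopologicalSpace G] [Group G]
    [LocallyCompactSpace G] [T2Space G]
    (Λ : CFClosed G) (hFLC : FLC Λ) :
    ∃ U : Set G, IsOpen U ∧ (1 : G) ∈ U ∧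
      ∀ P ∈ discreteHull Λ, (P : Set G) ∩ U = {1} := by
  obtain ⟨K, hKc, hK⟩ := exists_compact_mem_nhds (1 : G)
  obtain ⟨𝓕, h𝓕, hF, hKP⟩ := hFLC K hKc
  obtain ⟨U, hU, h1U, hPU⟩ := exists_isOpen_inter_eq_singleton_one_of_inter_eq_smul
    (P := fun P : discreteHull Λ => (P : Set G)) hK h𝓕 hF (fun P => P.2.2) (fun P => hKP P P.2)
  exact ⟨U, hU, h1U, fun P hP => hPU ⟨P, hP⟩⟩

/-- FLC implies uniform discreteness near the identity: there is an open neighborhood `U`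
of `e` such that `P ∩ U = {e}` for every `P ∈ Ω₀(Λ)`. -/
theorem FLC_implies_uniformly_discrete (G : Type*) [TopologicalSpace G] [Group G]
    [IsTopologicalGroup G] [LocallyCompactSpace G] [SecondCountableTopology G] [T2Space G]
    (Λ : CFClosed G) (hFLC : FLC Λ) :
    ∃ U : Set G, IsOpen U ∧ (1 : G) ∈ U ∧
      ∀ P ∈ discreteHull Λ, (P : Set G) ∩ U = {1} :=
  FLC_implies_uniformly_discrete_general G Λ hFLC
end

section
/- Let G be a locally compact, second countable, Hausdorff topological group and let Λ ⊆ G be a closed subset with finite local complexity. Then the discrete hull Ω₀(Λ), with the subspace topology inherited from the Chabauty–Fell topology on 𝒞(G), is totally disconnected. -/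
open Set Filter Topology Pointwise

/-!
By finite local complexity, for every compact `K` the sets `K ∩ P`, `P ∈ Ω₀(Λ)`, are all
contained in one finite set: since `1 ∈ P`, each of them is a translate `f₀⁻¹ F` of a pattern
`F ∈ 𝓕` with `f₀ ∈ F`. Hence every `x ∈ G` has a compact neighbourhood `L` with `P ∩ L ⊆ {x}`
for all `P ∈ Ω₀(Λ)`, so on `Ω₀(Λ)` the condition `x ∈ P` is both the open condition
`P ∩ int L ≠ ∅` and the complement of the open condition `P ∩ L = ∅`. Two distinct points of
`Ω₀(Λ)` are told apart by some `x`, and therefore lie in complementary relatively clopen sets.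
-/

namespace CFClosed

variable {G : Type*} [TopologicalSpace G]

lemma isOpen_setOf_inter_eq_empty {K : Set G} (hK : IsCompact K) :
    IsOpen {C : CFClosed G | (C : Set G) ∩ K = ∅} :=
  TopologicalSpace.isOpen_generateFrom_of_mem (Or.inl ⟨K, hK, rfl⟩)

lemma isOpen_setOf_inter_nonempty {U : Set G} (hU : IsOpen U) :
    IsOpen {C : CFClosed G | ((C : Set G) ∩ U).Nonempty} :=
  TopologicalSpace.isOpen_generateFrom_of_mem (Or.inr ⟨U, hU, rfl⟩)

end CFClosed

namespace FLC

variable {G : Type*} [TopologicalSpace G] [Group G] {Λ : CFClosed G}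

lemma exists_finite_superset_inter (hFLC : FLC Λ) {K : Set G} (hK : IsCompact K) :
    ∃ D : Set G, D.Finite ∧ ∀ P ∈ discreteHull Λ, K ∩ (P : Set G) ⊆ D := by
  obtain ⟨𝓕, h𝓕, hF, hpattern⟩ := hFLC (insert 1 K) (hK.insert 1)
  refine ⟨⋃ F ∈ 𝓕, F⁻¹ * F, h𝓕.biUnion fun F hF𝓕 => (hF F hF𝓕).inv.mul (hF F hF𝓕), ?_⟩
  intro P hP y ⟨hyK, hyP⟩
  obtain ⟨h, F, hF𝓕, hPF⟩ := hpattern P hP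
  obtain ⟨f₀, hf₀, h_one⟩ : (1 : G) ∈ h • F := hPF ▸ ⟨mem_insert 1 K, hP.2⟩
  obtain ⟨f, hf, h_y⟩ : y ∈ h • F := hPF ▸ ⟨mem_insert_of_mem 1 hyK, hyP⟩
  obtain rfl : h = f₀⁻¹ := eq_inv_of_mul_eq_one_left h_one
  subst h_y
  exact mem_biUnion hF𝓕 (mul_mem_mul (inv_mem_inv.mpr hf₀) hf)

lemma exists_isolating_nhd [LocallyCompactSpace G] [T1Space G] (hFLC : FLC Λ) (x : G) :
    ∃ L : Set G, IsCompact L ∧ x ∈ interior L ∧ ∀ P ∈ discreteHull Λ, (P : Set G) ∩ L ⊆ {x} := by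
  obtain ⟨K, hK, hKx⟩ := exists_compact_mem_nhds x
  obtain ⟨D, hD, hKD⟩ := hFLC.exists_finite_superset_inter hK
  have hU : IsOpen (interior K \ (D \ {x})) :=
    isOpen_interior.sdiff (hD.subset sdiff_subset).isClosed
  obtain ⟨L, hL, hLx, hLU⟩ :=
    exists_compact_subset hU ⟨mem_interior_iff_mem_nhds.mpr hKx, fun h => h.2 rfl⟩
  refine ⟨L, hL, hLx, fun P hP y ⟨hyP, hyL⟩ => ?_⟩
  have hyK : y ∈ K := interior_subset (hLU hyL).1
  by_contra hyx
  exact (hLU hyL).2 ⟨hKD P hP ⟨hyK, hyP⟩, hyx⟩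

lemma exists_separation [LocallyCompactSpace G] [T1Space G] (hFLC : FLC Λ) (x : G) :
    ∃ u v : Set (CFClosed G), IsOpen u ∧ IsOpen v ∧ Disjoint u v ∧
      ∀ P ∈ discreteHull Λ, (x ∈ P → P ∈ u) ∧ (x ∉ P → P ∈ v) := by
  obtain ⟨L, hL, hLx, hPL⟩ := hFLC.exists_isolating_nhd x
  refine ⟨_, _, CFClosed.isOpen_setOf_inter_nonempty isOpen_interior,
    CFClosed.isOpen_setOf_inter_eq_empty hL, ?_, fun P hP => ⟨fun hxP => ⟨x, hxP, hLx⟩, ?_⟩⟩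
  · refine Set.disjoint_left.mpr fun C ⟨y, hyC, hyL⟩ hCL => ?_
    exact (eq_empty_iff_forall_notMem.mp hCL) y ⟨hyC, interior_subset hyL⟩
  · intro hxP
    refine eq_empty_iff_forall_notMem.mpr fun y hy => hxP ?_
    exact (mem_singleton_iff.mp (hPL P hP hy)) ▸ hy.1

lemma isTotallySeparated_discreteHull [LocallyCompactSpace G] [T1Space G] (hFLC : FLC Λ) :
    IsTotallySeparated (discreteHull Λ) := by
  intro P hP Q hQ hPQ
  obtain ⟨x, hx⟩ : ∃ x, ¬(x ∈ P ↔ x ∈ Q) := not_forall.mp (mt SetLike.ext hPQ)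
  obtain ⟨u, v, hu, hv, huv, hsep⟩ := hFLC.exists_separation x
  have hcover : discreteHull Λ ⊆ u ∪ v := fun R hR => by
    by_cases hxR : x ∈ R
    exacts [Or.inl ((hsep R hR).1 hxR), Or.inr ((hsep R hR).2 hxR)]
  by_cases hxP : x ∈ P
  · have hxQ : x ∉ Q := fun hxQ => hx (iff_of_true hxP hxQ)
    exact ⟨u, v, hu, hv, (hsep P hP).1 hxP, (hsep Q hQ).2 hxQ, hcover, huv⟩
  · have hxQ : x ∈ Q := by_contra fun hxQ => hx (iff_of_false hxP hxQ)
    exact ⟨v, u, hv, hu, (hsep P hP).2 hxP, (hsep Q hQ).1 hxQ, union_comm u v ▸ hcover,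
      huv.symm⟩

end FLC

theorem discreteHull_totallyDisconnected_general (G : Type*) [TopologicalSpace G] [Group G]
    [LocallyCompactSpace G] [T2Space G]
    (Λ : CFClosed G) (hFLC : FLC Λ) :
    IsTotallyDisconnected (discreteHull Λ) :=
  hFLC.isTotallySeparated_discreteHull.isTotallyDisconnected

/-- For an FLC point set, the discrete hull is totally disconnected. -/
theorem discreteHull_totallyDisconnected (G : Type*) [TopologicalSpace G] [Group G]
    [IsTopologicalGroup G] [LocallyCompactSpace G] [SecondCountableTopology G] [T2Space G]
    (Λ : CFClosed G) (hFLC : FLC Λ) :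
    IsTotallyDisconnected (discreteHull Λ) :=
  discreteHull_totallyDisconnected_general G Λ hFLC
end

section
/- Let G be a locally compact, second countable, Hausdorff topological group, let Λ ⊆ G be a closed subset with finite local complexity, and let P, Q ∈ Ω₀(Λ) with P ≠ Q. Then there exist a compact set K ⊆ G, a finite set F ⊆ G, and h ∈ G such that K ∩ P = hF, while K ∩ Q ≠ h'F for every h' ∈ G. -/
open Set Filter Topology Pointwise

/-!
Pick `x` in the symmetric difference of `P` and `Q` and a compact neighbourhood `K` of `x`
missing whichever of the two sets does not contain `x`. By finite local complexity `K ∩ P` is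
a translate `hF` of a finite set, and exactly one of `K ∩ P`, `K ∩ Q` is empty, so `K ∩ Q`
cannot be a translate of `F`.
-/

theorem ne_smul_set_of_xor_nonempty {α β : Type*} [Group α] [MulAction α β] {A B F : Set β}
    {h : α} (hA : A = h • F) (hAB : Xor A.Nonempty B.Nonempty) (h' : α) : B ≠ h' • F := by
  rintro rfl
  simp only [hA, smul_set_nonempty, xor_self] at hAB

theorem exists_isCompact_inter_nonempty_not_inter_nonempty {X : Type*} [TopologicalSpace X]
    [LocallyCompactSpace X] {A B : Set X} (hB : IsClosed B) {x : X} (hxA : x ∈ A)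
    (hxB : x ∉ B) : ∃ K, IsCompact K ∧ (K ∩ A).Nonempty ∧ ¬(K ∩ B).Nonempty := by
  obtain ⟨K, hKx, hKB, hK⟩ := local_compact_nhds (hB.isOpen_compl.mem_nhds hxB)
  exact ⟨K, hK, ⟨x, mem_of_mem_nhds hKx, hxA⟩,
    fun ⟨_, hyK, hyB⟩ => hKB hyK hyB⟩

theorem exists_isCompact_xor_nonempty_inter {X : Type*} [TopologicalSpace X]
    [LocallyCompactSpace X] {A B : Set X} (hA : IsClosed A) (hB : IsClosed B) (hAB : A ≠ B) :
    ∃ K, IsCompact K ∧ Xor (K ∩ A).Nonempty (K ∩ B).Nonempty := by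
  obtain ⟨x, hx⟩ := symmDiff_nonempty.2 hAB
  rcases mem_symmDiff.1 hx with ⟨hxA, hxB⟩ | ⟨hxB, hxA⟩
  · obtain ⟨K, hK, hKA, hKB⟩ := exists_isCompact_inter_nonempty_not_inter_nonempty hB hxA hxB
    exact ⟨K, hK, Or.inl ⟨hKA, hKB⟩⟩
  · obtain ⟨K, hK, hKB, hKA⟩ := exists_isCompact_inter_nonempty_not_inter_nonempty hA hxB hxA
    exact ⟨K, hK, Or.inr ⟨hKB, hKA⟩⟩

open Pointwise in
theorem separating_patch_general (G : Type*) [TopologicalSpace G] [Group G]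
    [LocallyCompactSpace G]
    (Λ : CFClosed G) (hFLC : FLC Λ) (P Q : CFClosed G) (hP : P ∈ discreteHull Λ)
    (hPQ : P ≠ Q) :
    ∃ K : Set G, IsCompact K ∧ ∃ F : Set G, F.Finite ∧ ∃ h : G,
      K ∩ (P : Set G) = h • F ∧ ∀ h' : G, K ∩ (Q : Set G) ≠ h' • F := by
  obtain ⟨K, hK, hKPQ⟩ :=
    exists_isCompact_xor_nonempty_inter P.isClosed' Q.isClosed' (SetLike.coe_injective.ne hPQ)
  obtain ⟨𝓕, -, h𝓕, hpatch⟩ := hFLC K hK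
  obtain ⟨h, F, hF, hKP⟩ := hpatch P hP
  exact ⟨K, hK, F, h𝓕 F hF, h, hKP, ne_smul_set_of_xor_nonempty hKP hKPQ⟩

open Pointwise in
/-- Distinct elements of the discrete hull of an FLC point set are separated by a patch:
there exist a compact `K`, a finite `F` and `h ∈ G` with `K ∩ P = hF` while `K ∩ Q ≠ h'F`
for every `h'`. -/
theorem separating_patch (G : Type*) [TopologicalSpace G] [Group G]
    [IsTopologicalGroup G] [LocallyCompactSpace G] [SecondCountableTopology G] [T2Space G]
    (Λ : CFClosed G) (hFLC : FLC Λ) (P Q : CFClosed G) (hP : P ∈ discreteHull Λ)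
    (hQ : Q ∈ discreteHull Λ) (hPQ : P ≠ Q) :
    ∃ K : Set G, IsCompact K ∧ ∃ F : Set G, F.Finite ∧ ∃ h : G,
      K ∩ (P : Set G) = h • F ∧ ∀ h' : G, K ∩ (Q : Set G) ≠ h' • F :=
  separating_patch_general G Λ hFLC P Q hP hPQ
end

section
/- Let G and H be locally compact, second countable, Hausdorff topological groups, let Γ be a discrete subgroup of G × H such that the projection π_G : G × H → G is injective on Γ, and let C ⊆ H be compact. Set D = π_G({γ ∈ Γ : π_H(γ) ∈ C}). Then D is uniformly discrete: there exists an open neighborhood U of the identity e of G such that (D⁻¹D) ∩ U ⊆ {e}, where D⁻¹D = {a⁻¹b : a, b ∈ D}. -/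
/-!
Quotients `a⁻¹ b` of points of `D` are first coordinates of elements of `Γ` whose second
coordinate lies in the compact set `C⁻¹ C`. As `Γ` is closed and discrete, the nontrivial such
elements form a closed subset of `G × C⁻¹ C`; by the tube lemma its projection to `G` is closed,
and it misses `1` because `π_G` is injective on `Γ`. Its complement is the required `U`.
-/

open Pointwise

theorem IsClosed.isClosed_image_fst_of_subset_prod {X Y : Type*} [TopologicalSpace X]
    [TopologicalSpace Y] {s : Set (X × Y)} {K : Set Y} (hs : IsClosed s) (hK : IsCompact K)
    (hsK : s ⊆ Set.univ ×ˢ K) : IsClosed (Prod.fst '' s) := by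
  rw [← isOpen_compl_iff, isOpen_iff_forall_mem_open]
  intro x hx
  have hxK : {x} ×ˢ K ⊆ sᶜ := by
    rintro ⟨x', y⟩ ⟨rfl, -⟩ hxy
    exact hx ⟨_, hxy, rfl⟩
  obtain ⟨u, v, hu, -, hxu, hKv, huv⟩ :=
    generalized_tube_lemma isCompact_singleton hK hs.isOpen_compl hxK
  refine ⟨u, ?_, hu, hxu rfl⟩
  rintro x' hx' ⟨p, hps, rfl⟩
  exact huv ⟨hx', hKv (hsK hps).2⟩ hps

theorem Subgroup.isClosed_image_fst_of_subset_prod {G H : Type*} [Group G] [Group H]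
    [TopologicalSpace G] [IsTopologicalGroup G] [T2Space G]
    [TopologicalSpace H] [IsTopologicalGroup H] [T2Space H]
    (Γ : Subgroup (G × H)) [DiscreteTopology Γ] {s : Set (G × H)} {K : Set H}
    (hK : IsCompact K) (hsΓ : s ⊆ Γ) (hsK : s ⊆ Set.univ ×ˢ K) : IsClosed (Prod.fst '' s) :=
  (isClosed_of_subset_discrete_closed hsΓ (isDiscrete_iff_discreteTopology.mpr ‹_›)
    Subgroup.isClosed_of_discrete).isClosed_image_fst_of_subset_prod hK hsK

theorem Subgroup.inv_image_fst_mul_image_fst_subset {G H : Type*} [Group G] [Group H]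
    (Γ : Subgroup (G × H)) (C : Set H) :
    (Prod.fst '' {γ : G × H | γ ∈ Γ ∧ γ.2 ∈ C})⁻¹ * Prod.fst '' {γ : G × H | γ ∈ Γ ∧ γ.2 ∈ C} ⊆
      Prod.fst '' {γ : G × H | γ ∈ Γ ∧ γ.2 ∈ C⁻¹ * C} := by
  rintro _ ⟨a, ⟨γ₁, ⟨hγ₁, hγ₁C⟩, hγ₁a⟩, b, ⟨γ₂, ⟨hγ₂, hγ₂C⟩, rfl⟩, rfl⟩
  refine ⟨γ₁⁻¹ * γ₂, ⟨Γ.mul_mem (Γ.inv_mem hγ₁) hγ₂, Set.mul_mem_mul (by simpa) hγ₂C⟩, ?_⟩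
  simp [hγ₁a]

theorem model_set_uniformly_discrete_general (G H : Type*) [Group G] [Group H]
    [TopologicalSpace G] [IsTopologicalGroup G] [T2Space G]
    [TopologicalSpace H] [IsTopologicalGroup H] [T2Space H]
    (Γ : Subgroup (G × H)) [DiscreteTopology Γ]
    (hinj : Set.InjOn Prod.fst (Γ : Set (G × H)))
    (C : Set H) (hC : IsCompact C) :
    ∃ U : Set G, IsOpen U ∧ (1 : G) ∈ U ∧
      ((Prod.fst '' {γ : G × H | γ ∈ Γ ∧ γ.2 ∈ C})⁻¹ *
          (Prod.fst '' {γ : G × H | γ ∈ Γ ∧ γ.2 ∈ C})) ∩ U ⊆ {1} := by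
  set S := {γ : G × H | γ ∈ Γ ∧ γ.2 ∈ C⁻¹ * C ∧ γ ≠ 1}
  have hS : IsClosed (Prod.fst '' S) :=
    Γ.isClosed_image_fst_of_subset_prod (hC.inv.mul hC) (fun γ hγ ↦ hγ.1)
      (fun γ hγ ↦ ⟨trivial, hγ.2.1⟩)
  refine ⟨(Prod.fst '' S)ᶜ, hS.isOpen_compl, ?_, ?_⟩
  · rintro ⟨γ, ⟨hγ, -, hγ1⟩, hγfst⟩
    exact hγ1 (hinj hγ Γ.one_mem hγfst)
  · rintro _ ⟨hd, hdU⟩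
    obtain ⟨γ, ⟨hγ, hγK⟩, rfl⟩ := Γ.inv_image_fst_mul_image_fst_subset C hd
    obtain rfl : γ = 1 := by_contra fun h ↦ hdU ⟨γ, ⟨hγ, hγK, h⟩, rfl⟩
    rfl

/-- If `Γ` is a discrete subgroup of `G × H` on which the first projection is injective and
`C ⊆ H` is compact, then `D = π_G({γ ∈ Γ : π_H(γ) ∈ C})` is uniformly discrete. -/
theorem model_set_uniformly_discrete (G H : Type*) [Group G] [Group H]
    [TopologicalSpace G] [IsTopologicalGroup G] [LocallyCompactSpace G]
    [SecondCountableTopology G] [T2Space G]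
    [TopologicalSpace H] [IsTopologicalGroup H] [LocallyCompactSpace H]
    [SecondCountableTopology H] [T2Space H]
    (Γ : Subgroup (G × H)) [DiscreteTopology Γ]
    (hinj : Set.InjOn Prod.fst (Γ : Set (G × H)))
    (C : Set H) (hC : IsCompact C) :
    ∃ U : Set G, IsOpen U ∧ (1 : G) ∈ U ∧
      ((Prod.fst '' {γ : G × H | γ ∈ Γ ∧ γ.2 ∈ C})⁻¹ *
          (Prod.fst '' {γ : G × H | γ ∈ Γ ∧ γ.2 ∈ C})) ∩ U ⊆ {1} :=
  model_set_uniformly_discrete_general G H Γ hinj C hC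
end

section
/- Let G be a locally compact, second countable, Hausdorff topological group and let Λ ⊆ G be a closed subset with finite local complexity. Then the set X = ⋃_{P ∈ Ω₀(Λ)} P is discrete and closed in G; more precisely, for every compact set K ⊆ G the intersection K ∩ X is finite. -/
open Set Filter Topology Pointwise

theorem mem_inv_mul_of_one_mem_smul {G : Type*} [Group G] {h x : G} {F : Set G}
    (h1 : (1 : G) ∈ h • F) (hx : x ∈ h • F) : x ∈ F⁻¹ * F := by
  obtain ⟨f₀, hf₀, hf₀_eq⟩ := h1
  obtain ⟨f, hf, rfl⟩ := hx
  simp only [smul_eq_mul] at hf₀_eq ⊢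
  rw [eq_inv_of_mul_eq_one_left hf₀_eq]
  exact Set.mul_mem_mul (Set.inv_mem_inv.mpr hf₀) hf

/-- Every `P ∈ Ω₀(Λ)` contains `1`, so applying FLC to `K ∪ {1}` pins `K ∩ P` inside
`F⁻¹ * F` for one of finitely many finite patches `F`. -/
theorem FLC.finite_inter_iUnion_discreteHull {G : Type*} [TopologicalSpace G] [Group G]
    {Λ : CFClosed G} (hΛ : FLC Λ) {K : Set G} (hK : IsCompact K) :
    (K ∩ ⋃ P ∈ discreteHull Λ, (P : Set G)).Finite := by
  obtain ⟨𝓕, h𝓕, hF_fin, hpatch⟩ := hΛ (K ∪ {1}) (hK.union isCompact_singleton)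
  refine (h𝓕.biUnion fun F hF => (hF_fin F hF).inv.mul (hF_fin F hF)).subset ?_
  rintro x ⟨hxK, hxX⟩
  obtain ⟨P, hP, hxP⟩ := mem_iUnion₂.mp hxX
  obtain ⟨h, F, hF, hKP⟩ := hpatch P hP
  have h1 : (1 : G) ∈ h • F := hKP ▸ ⟨Or.inr rfl, hP.2⟩
  have hx : x ∈ h • F := hKP ▸ ⟨Or.inl hxK, hxP⟩
  exact mem_iUnion₂.mpr ⟨F, hF, mem_inv_mul_of_one_mem_smul h1 hx⟩

theorem isClosed_and_isDiscrete_of_finite_inter_isCompact {X : Type*} [TopologicalSpace X]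
    [T1Space X] [WeaklyLocallyCompactSpace X] {S : Set X}
    (hS : ∀ K : Set X, IsCompact K → (K ∩ S).Finite) : IsClosed S ∧ IsDiscrete S := by
  refine isClosed_and_discrete_iff.mpr fun x => disjoint_principal_right.mpr ?_
  obtain ⟨K, hK, hKx⟩ := exists_compact_mem_nhds x
  have hfar : ((K ∩ S) \ {x})ᶜ ∈ 𝓝 x :=
    ((hS K hK).sdiff.isClosed.isOpen_compl).mem_nhds fun hx => hx.2 rfl
  refine mem_nhdsWithin_iff_exists_mem_nhds_inter.mpr ⟨_, inter_mem hKx hfar, ?_⟩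
  rintro y ⟨⟨hyK, hy_far⟩, hyx⟩ hyS
  exact hy_far ⟨⟨hyK, hyS⟩, hyx⟩

theorem union_discreteHull_discrete_general (G : Type*) [TopologicalSpace G] [Group G]
    [LocallyCompactSpace G] [T2Space G]
    (Λ : CFClosed G) (hFLC : FLC Λ) :
    (∀ K : Set G, IsCompact K → (K ∩ ⋃ P ∈ discreteHull Λ, (P : Set G)).Finite) ∧
      IsClosed (⋃ P ∈ discreteHull Λ, (P : Set G)) ∧
      DiscreteTopology (⋃ P ∈ discreteHull Λ, (P : Set G) : Set G) := by
  have hfin := fun K (hK : IsCompact K) => hFLC.finite_inter_iUnion_discreteHull hK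
  obtain ⟨hclosed, hdiscrete⟩ := isClosed_and_isDiscrete_of_finite_inter_isCompact hfin
  exact ⟨hfin, hclosed, hdiscrete.to_subtype⟩

/-- For an FLC point set `Λ`, the set `X = ⋃_{P ∈ Ω₀(Λ)} P` is discrete and closed in `G`;
more precisely, `K ∩ X` is finite for every compact `K`. -/
theorem union_discreteHull_discrete (G : Type*) [TopologicalSpace G] [Group G]
    [IsTopologicalGroup G] [LocallyCompactSpace G] [SecondCountableTopology G] [T2Space G]
    (Λ : CFClosed G) (hFLC : FLC Λ) :
    (∀ K : Set G, IsCompact K → (K ∩ ⋃ P ∈ discreteHull Λ, (P : Set G)).Finite) ∧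
      IsClosed (⋃ P ∈ discreteHull Λ, (P : Set G)) ∧
      DiscreteTopology (⋃ P ∈ discreteHull Λ, (P : Set G) : Set G) :=
  union_discreteHull_discrete_general G Λ hFLC
end

section
/- Let G be a group with identity e, let Ω₀ be a collection of subsets of G each containing e, let K ⊆ G with e ∈ K, and let 𝓕 be a finite collection of finite subsets of G such that for every P ∈ Ω₀ there exist h ∈ G and F ∈ 𝓕 with K ∩ P = hF. Then (⋃_{P ∈ Ω₀} P) ∩ K ⊆ ⋃_{F ∈ 𝓕} F⁻¹F, where F⁻¹F = {f⁻¹f' : f, f' ∈ F}; in particular (⋃_{P ∈ Ω₀} P) ∩ K is finite. -/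
open Pointwise

/-- If every `P ∈ Ω₀` contains `e`, `e ∈ K`, and every `K ∩ P` has the form `hF` with
`F ∈ 𝓕`, then `(⋃ P ∈ Ω₀, P) ∩ K ⊆ ⋃ F ∈ 𝓕, F⁻¹F`; in particular it is finite. -/
theorem union_inter_compact_subset (G : Type*) [Group G] (Ω₀ : Set (Set G))
    (hΩ₀ : ∀ P ∈ Ω₀, (1 : G) ∈ P) (K : Set G) (hK : (1 : G) ∈ K)
    (𝓕 : Set (Set G)) (h𝓕fin : 𝓕.Finite) (h𝓕 : ∀ F ∈ 𝓕, F.Finite)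
    (h : ∀ P ∈ Ω₀, ∃ g : G, ∃ F ∈ 𝓕, K ∩ P = g • F) :
    ((⋃ P ∈ Ω₀, P) ∩ K ⊆ ⋃ F ∈ 𝓕, F⁻¹ * F) ∧ ((⋃ P ∈ Ω₀, P) ∩ K).Finite := by
  have hsub : (⋃ P ∈ Ω₀, P) ∩ K ⊆ ⋃ F ∈ 𝓕, F⁻¹ * F := by
    rintro x ⟨hxU, hxK⟩
    simp only [Set.mem_iUnion] at hxU ⊢
    obtain ⟨P, hP, hxP⟩ := hxU
    obtain ⟨g, F, hF, hgF⟩ := h P hP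
    have h1 : (1 : G) ∈ g • F := hgF ▸ ⟨hK, hΩ₀ P hP⟩
    have hx : x ∈ g • F := hgF ▸ ⟨hxK, hxP⟩
    obtain ⟨f, hf, hf1⟩ := h1
    obtain ⟨f', hf', hfx⟩ := hx
    have hg : g = f⁻¹ := eq_inv_of_mul_eq_one_left hf1
    have hxe : x = f⁻¹ * f' := by rw [← hfx, hg]; rfl
    exact ⟨F, hF, hxe ▸ Set.mul_mem_mul (Set.inv_mem_inv.mpr hf) hf'⟩
  refine ⟨hsub, Set.Finite.subset ?_ hsub⟩
  exact Set.Finite.biUnion h𝓕fin fun F hF => ((h𝓕 F hF).inv.mul (h𝓕 F hF))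
end

section
/- Let n ∈ ℕ and let r be an equivalence relation on Fin n. Then the real n × n matrix M with entries M i j = 1 if r i j holds and M i j = 0 otherwise is positive semidefinite. -/
/-- The 0-1 matrix of an equivalence relation on `Fin n` is positive semidefinite. -/
theorem posSemidef_of_equivalence (n : ℕ) (r : Fin n → Fin n → Prop) [DecidableRel r]
    (hr : Equivalence r) :
    (Matrix.of fun i j : Fin n => if r i j then (1 : ℝ) else 0).PosSemidef := by
  have hne : ∀ i : Fin n, (Finset.univ.filter (r i)).Nonempty :=
    fun i => ⟨i, by simp [hr.refl i]⟩
  set rep : Fin n → Fin n := fun i => (Finset.univ.filter (r i)).min' (hne i) with hrep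
  have hrel : ∀ i, r i (rep i) := by
    intro i
    have := (Finset.univ.filter (r i)).min'_mem (hne i)
    simpa using this
  have key : ∀ i j, r i j ↔ rep i = rep j := by
    intro i j
    constructor
    · intro h
      have : Finset.univ.filter (r i) = Finset.univ.filter (r j) := by
        ext k
        simp only [Finset.mem_filter, Finset.mem_univ, true_and]
        exact ⟨fun hik => hr.trans (hr.symm h) hik, fun hjk => hr.trans h hjk⟩
      simp [hrep, this]
    · intro h
      have h1 := hrel i
      have h2 := hrel j
      rw [h] at h1
      exact hr.trans h1 (hr.symm h2)
  set A : Matrix (Fin n) (Fin n) ℝ :=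
    Matrix.of (fun k i : Fin n => if rep i = k then (1 : ℝ) else 0) with hA
  have hM : (Matrix.of fun i j : Fin n => if r i j then (1 : ℝ) else 0) = Matrix.conjTranspose A * A := by
    ext i j
    simp only [Matrix.mul_apply, Matrix.conjTranspose_apply, hA, Matrix.of_apply, star_trivial]
    rw [Finset.sum_eq_single (rep i)]
    · by_cases h : r i j
      · simp [h, (key i j).mp h]
      · have : rep i ≠ rep j := fun hc => h ((key i j).mpr hc)
        simp [h, this.symm]
    · intro b _ hb
      simp [Ne.symm hb]
    · simp
  rw [hM]
  exact Matrix.posSemidef_conjTranspose_mul_self A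
end

section
/- Let G be a group, n ∈ ℕ, and x, y : Fin n → G. Then the real n × n matrix M with entries M i j = 1 if (x j)⁻¹(x i) = (y j)⁻¹(y i) and M i j = 0 otherwise is positive semidefinite. -/
/-
The condition `(x j)⁻¹ x i = (y j)⁻¹ y i` says exactly that `f i = f j` for
`f i = x i (y i)⁻¹`. So the matrix is the indicator of the equivalence relation "same fibre of
`f`", which is the Gram matrix `A Aᴴ` of the incidence matrix `A i b = [f i = b]`, `b ∈ range f`.
-/

theorem Matrix.posSemidef_ite_apply_eq_apply {ι α R : Type*} [Fintype ι] [DecidableEq α]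
    [Ring R] [PartialOrder R] [StarRing R] [StarOrderedRing R] (f : ι → α) :
    (Matrix.of fun i j : ι => if f i = f j then (1 : R) else 0).PosSemidef := by
  let A : Matrix ι (Set.range f) R := Matrix.of fun i b => if f i = b then 1 else 0
  convert posSemidef_self_mul_conjTranspose A using 1
  ext i j
  rw [Matrix.mul_apply, Fintype.sum_eq_single ⟨f j, j, rfl⟩]
  · simp [A]
  · rintro ⟨b, hb⟩ hne
    have hjb : f j ≠ b := fun h => hne (Subtype.ext h.symm)
    simp [A, hjb]

theorem inv_mul_eq_inv_mul_iff_mul_inv_eq_mul_inv {G : Type*} [Group G] (a b c d : G) :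
    a⁻¹ * b = c⁻¹ * d ↔ b * d⁻¹ = a * c⁻¹ := by
  rw [inv_mul_eq_iff_eq_mul, mul_inv_eq_iff_eq_mul, mul_assoc]

/-- The 0-1 matrix with `M i j = 1` iff `(x j)⁻¹(x i) = (y j)⁻¹(y i)` is positive
semidefinite. -/
theorem posSemidef_matching_matrix (G : Type*) [Group G] [DecidableEq G] (n : ℕ)
    (x y : Fin n → G) :
    (Matrix.of fun i j : Fin n =>
      if (x j)⁻¹ * x i = (y j)⁻¹ * y i then (1 : ℝ) else 0).PosSemidef := by
  simp only [inv_mul_eq_inv_mul_iff_mul_inv_eq_mul_inv]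
  exact Matrix.posSemidef_ite_apply_eq_apply fun i => x i * (y i)⁻¹
end
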